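/- Let n ≥ 2, let 2 ≤ k ≤ n and α > 0. There exists a positive constant θ depending only on n and k with the following property: for every λ = (λ₁,…,λ_n) ∈ Γ̃_k with λ₁ ≥ λ₂ ≥ ⋯ ≥ λ_n and every 1 ≤ j ≤ k − 1, one has S_k^{jj}(λ) ≥ θ S_k(λ) / λ_j (note that λ_j > 0 for j ≤ k − 1 since λ ∈ Γ_{k−1}). -/

import Mathlib

open scoped BigOperators

/-- The `k`-th elementary symmetric polynomial `σ_k(λ)` of `λ ∈ ℝⁿ`, indexed by `k : ℤ`,
with the conventions `σ₀ = 1` and `σ_k = 0` for `k < 0` or `k > n`. -/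
noncomputable def esymmZ (n : ℕ) (k : ℤ) (lam : Fin n → ℝ) : ℝ :=
  if k < 0 then 0 else ∑ s ∈ Finset.univ.powersetCard k.toNat, ∏ i ∈ s, lam i

/-- `S_k(λ) := σ_k(λ) + α σ_{k-1}(λ)`. -/
noncomputable def SZ (n : ℕ) (α : ℝ) (k : ℤ) (lam : Fin n → ℝ) : ℝ :=
  esymmZ n k lam + α * esymmZ n (k - 1) lam

/-- The Garding cone `Γ_m = {λ ∈ ℝⁿ : σ_j(λ) > 0 for j = 1,…,m}` (so `Γ₀ = ℝⁿ`). -/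
def Gamma (n : ℕ) (m : ℕ) : Set (Fin n → ℝ) :=
  {lam | ∀ j : ℕ, 1 ≤ j → j ≤ m → 0 < esymmZ n j lam}

/-- `Γ̃_k := Γ_{k-1} ∩ {λ : S_k(λ) > 0}`. -/
def GammaTilde (n : ℕ) (α : ℝ) (k : ℕ) : Set (Fin n → ℝ) :=
  Gamma n (k - 1) ∩ {lam | 0 < SZ n α k lam}

/-- `σ_k(λ|i)`: the `k`-th elementary symmetric polynomial of the vector obtained
from `λ` by deleting the entry `λ_i`. -/
noncomputable def esymmDel (n : ℕ) (k : ℤ) (lam : Fin n → ℝ) (i : Fin n) : ℝ :=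
  if k < 0 then 0 else
    ∑ s ∈ (Finset.univ.erase i).powersetCard k.toNat, ∏ j ∈ s, lam j

/-- `S_k(λ|i) := σ_k(λ|i) + α σ_{k-1}(λ|i)`.  In particular
`S_k^{ii}(λ) = ∂S_k/∂λ_i = S_{k-1}(λ|i) = SDel n α (k-1) lam i`. -/
noncomputable def SDel (n : ℕ) (α : ℝ) (k : ℤ) (lam : Fin n → ℝ) (i : Fin n) : ℝ :=
  esymmDel n k lam i + α * esymmDel n (k - 1) lam i

/-- `σ_k(λ|pq)`: the `k`-th elementary symmetric polynomial of the vector obtained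
from `λ` by deleting the entries `λ_p` and `λ_q`. -/
noncomputable def esymmDel2 (n : ℕ) (k : ℤ) (lam : Fin n → ℝ) (p q : Fin n) : ℝ :=
  if k < 0 then 0 else
    ∑ s ∈ ((Finset.univ.erase p).erase q).powersetCard k.toNat, ∏ l ∈ s, lam l

/-- `S_k^{pp,qq}(λ) = ∂²S_k/∂λ_p∂λ_q`, which equals
`σ_{k-2}(λ|pq) + α σ_{k-3}(λ|pq)` for `p ≠ q`, and `0` for `p = q`. -/
noncomputable def Spq (n : ℕ) (α : ℝ) (k : ℤ) (lam : Fin n → ℝ) (p q : Fin n) : ℝ :=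
  if p = q then 0 else esymmDel2 n (k - 2) lam p q + α * esymmDel2 n (k - 3) lam p q

/-!
Put `s = (α, λ)`. Then `S_k(λ) = σ_k(s)` and `S_k^{jj}(λ) = σ_{k-1}(t)` with `t = s | λ_j`,
and `λ ∈ Γ̃_k` implies that `s` lies in the Gårding cone `Γ_k`. Expanding in `a = λ_j` gives
`σ_k(s) = a σ_{k-1}(t) + σ_k(t)`, and at most `k - 1` entries of `t` exceed `a`, because `λ` is
decreasing and `j < k - 1`. Peeling positive entries off `t` one at a time shows
`σ_k(t) ≤ 2^n a σ_{k-1}(t)` when `a > 0`, so `θ = 1 / (1 + 2^n)` works; when `a ≤ 0` the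
right-hand side `θ S_k(λ) / a` is nonpositive.

That induction needs that deleting an entry maps `Γ_{k+1}` into `Γ_k`. This follows from
Newton's inequality `σ_{k-1} σ_{k+1} ≤ σ_k²`. Rolle's theorem leaves the normalized means
`σ_i / C(N, i)` unchanged when passing to the roots of the derivative, and passing to reciprocals
then reduces the inequality to `2N σ₂ ≤ (N - 1) σ₁²`.
-/

theorem Nat.choose_mul_choose_add_two_le_sq (n k : ℕ) :
    n.choose k * n.choose (k + 2) ≤ n.choose (k + 1) ^ 2 := by
  rcases lt_or_ge n (k + 1) with hn | hn
  · simp [Nat.choose_eq_zero_of_lt (by omega : n < k + 2)]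
  obtain ⟨m, rfl⟩ : ∃ m, n = k + 1 + m := ⟨n - (k + 1), by omega⟩
  have h1 : (k + 1 + m).choose (k + 1) * (k + 1) = (k + 1 + m).choose k * (m + 1) := by
    rw [Nat.choose_succ_right_eq]; congr 1; omega
  have h2 : (k + 1 + m).choose (k + 2) * (k + 2) = (k + 1 + m).choose (k + 1) * m := by
    rw [Nat.choose_succ_right_eq]; congr 1; omega
  refine Nat.le_of_mul_le_mul_right (c := (k + 2) * (m + 1)) ?_ (by positivity)
  calc (k + 1 + m).choose k * (k + 1 + m).choose (k + 2) * ((k + 2) * (m + 1))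
      = (k + 1 + m).choose (k + 1) ^ 2 * ((k + 1) * m) := by
        rw [show (k + 1 + m).choose k * (k + 1 + m).choose (k + 2) * ((k + 2) * (m + 1))
          = ((k + 1 + m).choose k * (m + 1)) * ((k + 1 + m).choose (k + 2) * (k + 2)) by ring,
          ← h1, h2]
        ring
    _ ≤ (k + 1 + m).choose (k + 1) ^ 2 * ((k + 2) * (m + 1)) := by gcongr <;> omega

namespace Multiset

section CommSemiring

variable {R : Type*} [CommSemiring R]

theorem esymm_zero (s : Multiset R) : s.esymm 0 = 1 := by
  simp [esymm]

theorem esymm_cons_succ (a : R) (s : Multiset R) (k : ℕ) :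
    (a ::ₘ s).esymm (k + 1) = a * s.esymm k + s.esymm (k + 1) := by
  simp only [esymm, powersetCard_cons, map_add, sum_add, map_map, Function.comp_def, prod_cons,
    sum_map_mul_left, add_comm]

theorem esymm_eq_zero_of_card_lt {s : Multiset R} {k : ℕ} (h : card s < k) : s.esymm k = 0 := by
  simp [esymm, powersetCard_eq_empty _ h]

theorem esymm_card (s : Multiset R) : s.esymm (card s) = s.prod := by
  induction s using Multiset.induction with
  | empty => simp [esymm_zero]
  | cons a s ih =>
    rw [card_cons, esymm_cons_succ, ih, esymm_eq_zero_of_card_lt (Nat.lt_succ_self _), prod_cons,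
      add_zero]

theorem esymm_one (s : Multiset R) : s.esymm 1 = s.sum := by
  induction s using Multiset.induction with
  | empty => exact esymm_eq_zero_of_card_lt (by simp)
  | cons a s ih => rw [esymm_cons_succ, esymm_zero, ih, sum_cons, mul_one]

end CommSemiring

theorem esymm_pos {s : Multiset ℝ} (hs : ∀ a ∈ s, 0 < a) {k : ℕ} (hk : k ≤ card s) :
    0 < s.esymm k := by
  induction s using Multiset.induction generalizing k with
  | empty => simp_all [esymm_zero]
  | cons a s ih =>
    rcases k with _ | k
    · simp [esymm_zero]
    rw [esymm_cons_succ]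
    have hs' : ∀ b ∈ s, 0 < b := fun b hb => hs b (mem_cons_of_mem hb)
    rw [card_cons] at hk
    have hterm : 0 < a * s.esymm k := mul_pos (hs a (mem_cons_self a s)) (ih hs' (by omega))
    rcases (Nat.le_of_succ_le_succ hk).lt_or_eq with hlt | heq
    · exact add_pos hterm (ih hs' hlt)
    · rwa [esymm_eq_zero_of_card_lt (k := k + 1) (by omega), add_zero]

theorem prod_mul_esymm_map_inv {K : Type*} [Field K] {s : Multiset K} (hs : ∀ a ∈ s, a ≠ 0)
    {i : ℕ} (hi : i ≤ card s) : s.prod * (s.map (·⁻¹)).esymm i = s.esymm (card s - i) := by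
  induction s using Multiset.induction generalizing i with
  | empty => simp_all [esymm_zero]
  | cons a s ih =>
    have ha : a ≠ 0 := hs a (mem_cons_self a s)
    have hs' : ∀ b ∈ s, b ≠ 0 := fun b hb => hs b (mem_cons_of_mem hb)
    rcases i with _ | i
    · rw [esymm_zero, mul_one, Nat.sub_zero, esymm_card]
    rw [card_cons] at hi ⊢
    rw [map_cons, esymm_cons_succ, prod_cons, Nat.add_sub_add_right]
    rcases (Nat.le_of_succ_le_succ hi).lt_or_eq with hlt | rfl
    · obtain ⟨m, hm⟩ : ∃ m, card s - i = m + 1 := ⟨card s - i - 1, by omega⟩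
      have e1 := ih hs' hlt
      have e2 := ih hs' hlt.le
      rw [show card s - (i + 1) = m by omega] at e1
      rw [hm] at e2
      rw [hm, esymm_cons_succ, ← e1, ← e2]
      field_simp
      ring
    · have e := ih hs' le_rfl
      rw [Nat.sub_self, esymm_zero] at e
      rw [esymm_eq_zero_of_card_lt (k := card s + 1) (by simp), Nat.sub_self, esymm_zero]
      linear_combination (a * a⁻¹) * e + mul_inv_cancel₀ ha

theorem two_mul_card_mul_esymm_two_le (s : Multiset ℝ) :
    2 * card s * s.esymm 2 ≤ (card s - 1) * s.esymm 1 ^ 2 := by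
  induction s using Multiset.induction with
  | empty => simp [esymm_one]
  | cons a s ih =>
    rw [esymm_cons_succ, esymm_cons_succ, esymm_zero, card_cons]
    push_cast
    rcases eq_or_ne s 0 with rfl | hs
    · simp [esymm_one, esymm_eq_zero_of_card_lt (s := (0 : Multiset ℝ)) (k := 2) (by simp)]
    have hM : (1 : ℝ) ≤ card s := by exact_mod_cast card_pos.mpr hs
    nlinarith [sq_nonneg (card s * a - s.esymm 1)]

open Polynomial in
/-- The roots of the derivative of `∏ (X - a)`, which are real by Rolle's theorem. -/
theorem exists_card_mul_esymm_eq (s : Multiset ℝ) :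
    ∃ s' : Multiset ℝ, card s' = card s - 1 ∧
      ∀ i < card s, (card s : ℝ) * s'.esymm i = (card s - i) * s.esymm i := by
  set g : ℝ[X] := (s.map fun a => X - C a).prod
  have hcoeff : ∀ i ≤ card s, g.coeff (card s - i) = (-1) ^ i * s.esymm i := fun i hi => by
    rw [prod_X_sub_C_coeff s (Nat.sub_le _ _), Nat.sub_sub_self hi]
  have hroots : card s ≤ card (derivative g).roots + 1 := by
    simpa only [g, roots_multiset_prod_X_sub_C] using card_roots_le_derivative g
  have hdeg : (derivative g).natDegree ≤ card s - 1 := by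
    simpa only [g, natDegree_multiset_prod_X_sub_C_eq_card] using natDegree_derivative_le g
  have hcard : card (derivative g).roots = card s - 1 := by
    have := card_roots' (derivative g)
    omega
  have hdeg' : (derivative g).natDegree = card s - 1 := by
    have := card_roots' (derivative g)
    omega
  refine ⟨(derivative g).roots, hcard, fun i hi => ?_⟩
  have hlead : (derivative g).leadingCoeff = card s := by
    have h0 := hcoeff 0 (Nat.zero_le _)
    rw [Nat.sub_zero, pow_zero, one_mul, esymm_zero] at h0
    rw [leadingCoeff, hdeg', coeff_derivative, Nat.sub_add_cancel (by omega), h0, one_mul,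
      Nat.cast_sub (by omega), Nat.cast_one, sub_add_cancel]
  have h := coeff_eq_esymm_roots_of_card (hcard.trans hdeg'.symm) (k := card s - 1 - i) (by omega)
  rw [hdeg', Nat.sub_sub_self (by omega), hlead, coeff_derivative,
    show card s - 1 - i + 1 = card s - i by omega, hcoeff i hi.le, Nat.sub_sub,
    Nat.cast_sub (by omega : 1 + i ≤ card s), Nat.cast_add, Nat.cast_one] at h
  have hsign : ((-1 : ℝ) ^ i) ≠ 0 := pow_ne_zero _ (by norm_num)
  apply mul_left_cancel₀ hsign
  linear_combination -h

noncomputable def esymmMean (s : Multiset ℝ) (i : ℕ) : ℝ :=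
  s.esymm i / (card s).choose i

theorem esymmMean_eq_zero_of_card_lt {s : Multiset ℝ} {i : ℕ} (h : card s < i) :
    s.esymmMean i = 0 := by
  rw [esymmMean, Nat.choose_eq_zero_of_lt h, Nat.cast_zero, div_zero]

theorem exists_esymmMean_eq (s : Multiset ℝ) :
    ∃ s' : Multiset ℝ, card s' = card s - 1 ∧ ∀ i < card s, s'.esymmMean i = s.esymmMean i := by
  obtain ⟨s', hcard, hs'⟩ := exists_card_mul_esymm_eq s
  refine ⟨s', hcard, fun i hi => ?_⟩
  obtain ⟨m, hm⟩ : ∃ m, card s = m + 1 := ⟨card s - 1, by omega⟩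
  have h := hs' i hi
  have hC : ∀ N, i ≤ N → ((N.choose i : ℕ) : ℝ) ≠ 0 := fun N hN => by
    exact_mod_cast (Nat.choose_pos hN).ne'
  rw [esymmMean, esymmMean, hcard, hm, Nat.add_sub_cancel,
    div_eq_div_iff (hC m (by omega)) (hC (m + 1) (by omega))]
  rw [hm] at h
  have hchoose : (m.choose i : ℝ) * (m + 1) = (m + 1).choose i * (m + 1 - i) := by
    have h' : ((m.choose i * (m + 1) : ℕ) : ℝ) = (((m + 1).choose i * (m + 1 - i) : ℕ) : ℝ) := by
      rw [Nat.choose_mul_succ_eq]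
    push_cast [Nat.cast_sub (show i ≤ m + 1 by omega)] at h'
    exact h'
  apply mul_left_cancel₀ (show (m + 1 : ℝ) ≠ 0 by positivity)
  push_cast at h
  linear_combination ((m + 1).choose i : ℝ) * h - s.esymm i * hchoose

theorem esymmMean_card_sub {s : Multiset ℝ} (hs : ∀ a ∈ s, a ≠ 0) {i : ℕ} (hi : i ≤ card s) :
    s.esymmMean (card s - i) = s.prod * (s.map (·⁻¹)).esymmMean i := by
  rw [esymmMean, esymmMean, card_map, Nat.choose_symm hi, ← prod_mul_esymm_map_inv hs hi,
    mul_div_assoc]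

theorem esymmMean_zero_mul_two_le (s : Multiset ℝ) :
    s.esymmMean 0 * s.esymmMean 2 ≤ s.esymmMean 1 ^ 2 := by
  rcases lt_or_ge (card s) 2 with hs | hs
  · rw [esymmMean_eq_zero_of_card_lt hs, mul_zero]
    positivity
  have hN : (2 : ℝ) ≤ card s := by exact_mod_cast hs
  rw [esymmMean, esymmMean, esymmMean, esymm_zero, Nat.choose_zero_right, Nat.choose_one_right,
    Nat.cast_choose_two, Nat.cast_one, div_one, one_mul, div_pow,
    div_le_div_iff₀ (by nlinarith) (by positivity)]
  nlinarith [two_mul_card_mul_esymm_two_le s]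

theorem esymmMean_mul_le_sq_of_card_eq {s : Multiset ℝ} {j : ℕ} (hs : card s = j + 2) :
    s.esymmMean j * s.esymmMean (j + 2) ≤ s.esymmMean (j + 1) ^ 2 := by
  by_cases h0 : (0 : ℝ) ∈ s
  · have hE : s.esymmMean (j + 2) = 0 := by
      rw [esymmMean, ← hs, esymm_card, prod_eq_zero h0, zero_div]
    rw [hE, mul_zero]
    positivity
  have hne : ∀ a ∈ s, a ≠ 0 := fun a ha h => h0 (h ▸ ha)
  have e := fun i (hi : i ≤ 2) => esymmMean_card_sub hne (i := i) (by omega)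
  rw [hs] at e
  have e0 := e 0 (by norm_num)
  have e1 := e 1 (by norm_num)
  have e2 := e 2 (by norm_num)
  simp only [Nat.sub_zero, Nat.add_sub_cancel, show j + 2 - 1 = j + 1 by omega] at e0 e1 e2
  rw [e0, e1, e2]
  nlinarith [esymmMean_zero_mul_two_le (s.map (·⁻¹)), sq_nonneg s.prod]

theorem esymmMean_mul_le_sq (s : Multiset ℝ) (j : ℕ) :
    s.esymmMean j * s.esymmMean (j + 2) ≤ s.esymmMean (j + 1) ^ 2 := by
  obtain ⟨N, hN⟩ : ∃ N, card s = N := ⟨_, rfl⟩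
  induction N generalizing s with
  | zero =>
    rw [esymmMean_eq_zero_of_card_lt (i := j + 2) (by omega), mul_zero]
    positivity
  | succ N ih =>
    rcases lt_trichotomy (N + 1) (j + 2) with hlt | heq | hgt
    · rw [esymmMean_eq_zero_of_card_lt (i := j + 2) (by omega), mul_zero]
      positivity
    · exact esymmMean_mul_le_sq_of_card_eq (hN.trans heq)
    · obtain ⟨s', hcard, hs'⟩ := exists_esymmMean_eq s
      rw [← hs' j (by omega), ← hs' (j + 1) (by omega), ← hs' (j + 2) (by omega)]
      exact ih s' (by omega)

theorem esymm_mul_le_sq (s : Multiset ℝ) (j : ℕ) :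
    s.esymm j * s.esymm (j + 2) ≤ s.esymm (j + 1) ^ 2 := by
  rcases le_or_gt (s.esymm j * s.esymm (j + 2)) 0 with h | h
  · exact h.trans (sq_nonneg _)
  have hj : j + 2 ≤ card s := by
    by_contra hc
    rw [esymm_eq_zero_of_card_lt (k := j + 2) (by omega), mul_zero] at h
    exact lt_irrefl _ h
  have hC : ∀ i ≤ card s, (0 : ℝ) < (card s).choose i := fun i hi => by
    exact_mod_cast Nat.choose_pos hi
  have he : ∀ i ≤ card s, s.esymm i = s.esymmMean i * (card s).choose i := fun i hi => by
    rw [esymmMean, div_mul_cancel₀ _ (hC i hi).ne']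
  have hbin : ((card s).choose j : ℝ) * (card s).choose (j + 2) ≤ (card s).choose (j + 1) ^ 2 := by
    exact_mod_cast Nat.choose_mul_choose_add_two_le_sq (card s) j
  rw [he j (by omega), he (j + 2) hj] at h ⊢
  rw [he (j + 1) (by omega)]
  have hE : 0 < s.esymmMean j * s.esymmMean (j + 2) := by
    nlinarith [mul_pos (hC j (by omega)) (hC (j + 2) hj)]
  nlinarith [esymmMean_mul_le_sq s j, mul_le_mul_of_nonneg_left hbin hE.le,
    sq_nonneg ((card s).choose (j + 1) : ℝ)]

/-- `Γ_k` on multisets; the condition at `m = 0` is automatic since `σ₀ = 1`. -/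
def gardingCone (k : ℕ) : Set (Multiset ℝ) :=
  {s | ∀ m ≤ k, 0 < s.esymm m}

section GardingCone

variable {s t : Multiset ℝ} {a b c : ℝ} {k : ℕ}

theorem gardingCone_anti : Antitone gardingCone :=
  fun _ _ hkk' _ hs m hm => hs m (hm.trans hkk')

theorem mem_gardingCone_of_pred (hs : s ∈ gardingCone (k - 1)) (hk : 0 < s.esymm k) :
    s ∈ gardingCone k := fun m hm =>
  hm.lt_or_eq.elim (fun hlt => hs m (by omega)) (fun heq => heq ▸ hk)

theorem card_le_of_mem_gardingCone (hs : s ∈ gardingCone k) : k ≤ card s := by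
  by_contra h
  have := hs k le_rfl
  rw [esymm_eq_zero_of_card_lt (by omega)] at this
  exact lt_irrefl _ this

theorem cons_mem_gardingCone (ha : 0 ≤ a) (hs : s ∈ gardingCone k) : a ::ₘ s ∈ gardingCone k := by
  rintro (_ | m) hm
  · rw [esymm_zero]; exact one_pos
  · rw [esymm_cons_succ]
    exact add_pos_of_nonneg_of_pos (mul_nonneg ha (hs m (by omega)).le) (hs (m + 1) hm)

theorem esymm_le_esymm_cons (ha : 0 ≤ a) (hs : s ∈ gardingCone k) :
    s.esymm k ≤ (a ::ₘ s).esymm k := by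
  rcases k with _ | k
  · rw [esymm_zero, esymm_zero]
  · rw [esymm_cons_succ]
    exact le_add_of_nonneg_left (mul_nonneg ha (hs k (by omega)).le)

theorem exists_pos_of_mem_gardingCone (hs : s ∈ gardingCone 1) : ∃ m ∈ s, 0 < m := by
  have h1 := hs 1 le_rfl
  rw [esymm_one] at h1
  by_contra! h
  have hsum := sum_le_card_nsmul s 0 h
  rw [smul_zero] at hsum
  exact hsum.not_gt h1

theorem erase_mem_gardingCone_of_nonpos (hs : s ∈ gardingCone k) (hb : b ∈ s) (hb0 : b ≤ 0) :
    s.erase b ∈ gardingCone k := by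
  intro m hm
  induction m with
  | zero => rw [esymm_zero]; exact one_pos
  | succ m ih =>
    have h := hs (m + 1) hm
    rw [← cons_erase hb, esymm_cons_succ] at h
    nlinarith [mul_nonpos_of_nonpos_of_nonneg hb0 (ih (by omega)).le]

/-- If some entry `b` is nonpositive, deleting `b` stays in `Γ_{k+1}`, and Newton's inequality
excludes `σ_k(s | a) ≤ 0`. -/
theorem esymm_erase_pos (hs : s ∈ gardingCone (k + 1)) (ha : a ∈ s) :
    0 < (s.erase a).esymm k := by
  induction s using Multiset.strongInductionOn generalizing k a with
  | ih s ih =>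
  by_cases hpos : ∀ b ∈ s, 0 < b
  · refine esymm_pos (fun b hb => hpos b (mem_of_mem_erase hb)) ?_
    have := card_le_of_mem_gardingCone hs
    have := card_erase_add_one ha
    omega
  obtain ⟨b, hb, hb0⟩ : ∃ b ∈ s, b ≤ 0 := by simpa using hpos
  have hsb : s.erase b ∈ gardingCone (k + 1) := erase_mem_gardingCone_of_nonpos hs hb hb0
  rcases eq_or_ne a b with rfl | hab
  · exact hsb k (by omega)
  rcases k with _ | k
  · rw [esymm_zero]; exact one_pos
  have ha' : a ∈ s.erase b := (mem_erase_of_ne hab).mpr ha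
  set u := (s.erase b).erase a
  have hA : 0 < u.esymm k := ih _ (erase_lt.mpr hb) (gardingCone_anti (by omega) hsb) ha'
  have hsb' : s.erase b = a ::ₘ u := (cons_erase ha').symm
  have hsa : s.erase a = b ::ₘ u := by
    rw [show u = (s.erase a).erase b from (erase_comm s a b).symm,
      cons_erase ((mem_erase_of_ne hab.symm).mpr hb)]
  have hsab : s = b ::ₘ a ::ₘ u := by rw [← hsb', cons_erase hb]
  have hN := esymm_mul_le_sq u k
  have h1 := hsb (k + 1) (by omega)
  have h2 := hs (k + 2) le_rfl
  rw [hsb', esymm_cons_succ] at h1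
  rw [hsab, esymm_cons_succ, esymm_cons_succ, esymm_cons_succ] at h2
  rw [hsa, esymm_cons_succ]
  by_contra! hneg
  nlinarith [mul_pos hA h2, mul_nonpos_of_nonpos_of_nonneg hneg h1.le]

theorem erase_mem_gardingCone (hs : s ∈ gardingCone (k + 1)) (ha : a ∈ s) :
    s.erase a ∈ gardingCone k := fun _ hm =>
  esymm_erase_pos (gardingCone_anti (by omega) hs) ha

/-- Peel off a positive entry `m`: the term `m σ_k(t | m)` is controlled by `c σ_k(t)` when
`m ≤ c`, and by induction one level down when `m > c`, which lowers the count of entries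
above `c`. -/
theorem esymm_succ_le_two_pow_mul (hc : 0 < c) (ht : t ∈ gardingCone k)
    (hcount : t.countP (c < ·) ≤ k) : t.esymm (k + 1) ≤ 2 ^ card t * c * t.esymm k := by
  induction t using Multiset.strongInductionOn generalizing k with
  | ih t ih =>
  have hk := ht k le_rfl
  rcases le_or_gt (t.esymm (k + 1)) 0 with hle | hgt
  · exact hle.trans (by positivity)
  have ht' : t ∈ gardingCone (k + 1) := mem_gardingCone_of_pred ht hgt
  obtain ⟨m, hm, hm0⟩ := exists_pos_of_mem_gardingCone (gardingCone_anti (by omega) ht')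
  obtain ⟨u, rfl⟩ : ∃ u, t = m ::ₘ u := ⟨t.erase m, (cons_erase hm).symm⟩
  have hu : u ∈ gardingCone k := by simpa using erase_mem_gardingCone ht' hm
  have hcount_u : u.countP (c < ·) ≤ k := (countP_le_of_le _ (le_cons_self u m)).trans hcount
  have hmono : u.esymm k ≤ (m ::ₘ u).esymm k := esymm_le_esymm_cons hm0.le hu
  have hC : (0 : ℝ) ≤ 2 ^ card u * c := by positivity
  have hrest : u.esymm (k + 1) ≤ 2 ^ card u * c * (m ::ₘ u).esymm k :=
    (ih u (lt_cons_self u m) hu hcount_u).trans (mul_le_mul_of_nonneg_left hmono hC)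
  have hhead : m * u.esymm k ≤ 2 ^ card u * c * (m ::ₘ u).esymm k := by
    rcases le_or_gt m c with hmc | hmc
    · calc m * u.esymm k ≤ c * (m ::ₘ u).esymm k := mul_le_mul hmc hmono (hu k le_rfl).le hc.le
        _ ≤ 2 ^ card u * c * (m ::ₘ u).esymm k := by
          rw [mul_assoc]
          exact le_mul_of_one_le_left (by positivity) (one_le_pow₀ one_le_two)
    · have hcount' : u.countP (c < ·) + 1 ≤ k := by rwa [countP_cons_of_pos _ hmc] at hcount
      obtain ⟨k, rfl⟩ : ∃ k', k = k' + 1 := ⟨k - 1, by omega⟩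
      have hIH := ih u (lt_cons_self u m) (k := k) (gardingCone_anti (by omega) hu) (by omega)
      rw [esymm_cons_succ]
      nlinarith [mul_le_mul_of_nonneg_left hIH hm0.le, mul_nonneg hC (hu (k + 1) le_rfl).le]
  rw [esymm_cons_succ, card_cons, pow_succ]
  linarith

theorem inv_one_add_two_pow_mul_esymm_cons_div_le (hs : a ::ₘ t ∈ gardingCone (k + 1))
    (hcount : t.countP (a < ·) ≤ k) :
    (1 + 2 ^ card t)⁻¹ * (a ::ₘ t).esymm (k + 1) / a ≤ t.esymm k := by
  have ht : t ∈ gardingCone k := by simpa using erase_mem_gardingCone hs (mem_cons_self a t)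
  have hk := ht k le_rfl
  rcases le_or_gt a 0 with ha | ha
  · exact (div_nonpos_of_nonneg_of_nonpos (by have := hs (k + 1) le_rfl; positivity) ha).trans
      hk.le
  rw [div_le_iff₀ ha, inv_mul_le_iff₀ (by positivity), esymm_cons_succ]
  nlinarith [esymm_succ_le_two_pow_mul ha ht hcount]

end GardingCone

end Multiset

section

open Multiset

variable {n : ℕ} {α : ℝ} {lam : Fin n → ℝ}

theorem esymmZ_natCast (m : ℕ) : esymmZ n m lam = (Finset.univ.val.map lam).esymm m := by
  rw [esymmZ, if_neg (by omega), Int.toNat_natCast, Finset.esymm_map_val]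

theorem esymmDel_natCast (m : ℕ) (j : Fin n) :
    esymmDel n m lam j = ((Finset.univ.erase j).val.map lam).esymm m := by
  rw [esymmDel, if_neg (by omega), Int.toNat_natCast, Finset.esymm_map_val]

theorem SZ_natCast (k : ℕ) : SZ n α k lam = (α ::ₘ Finset.univ.val.map lam).esymm k := by
  rcases k with _ | k
  · simp [SZ, esymmZ, esymm_zero]
  · rw [SZ, esymm_cons_succ, show ((k + 1 : ℕ) : ℤ) - 1 = k by push_cast; ring, esymmZ_natCast,
      esymmZ_natCast, add_comm]

theorem SDel_natCast (k : ℕ) (j : Fin n) :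
    SDel n α k lam j = (α ::ₘ (Finset.univ.erase j).val.map lam).esymm k := by
  rcases k with _ | k
  · simp [SDel, esymmDel, esymm_zero]
  · rw [SDel, esymm_cons_succ, show ((k + 1 : ℕ) : ℤ) - 1 = k by push_cast; ring,
      esymmDel_natCast, esymmDel_natCast, add_comm]

theorem cons_map_mem_gardingCone {k : ℕ} (hα : 0 ≤ α) (hlam : lam ∈ GammaTilde n α k) :
    α ::ₘ Finset.univ.val.map lam ∈ gardingCone k := by
  obtain ⟨hΓ, hS⟩ := hlam
  refine mem_gardingCone_of_pred (cons_mem_gardingCone hα fun m hm => ?_) (by rwa [← SZ_natCast])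
  rcases m with _ | m
  · rw [esymm_zero]; exact one_pos
  · rw [← esymmZ_natCast]
    exact hΓ (m + 1) (by omega) hm

theorem countP_lt_map_erase_le (hanti : Antitone lam) (j : Fin n) :
    ((Finset.univ.erase j).val.map lam).countP (lam j < ·) ≤ j := by
  rw [countP_map, ← Finset.filter_val, ← Finset.card_def, ← Fin.card_Iio]
  exact Finset.card_le_card fun i hi =>
    Finset.mem_Iio.mpr (hanti.reflect_lt (Finset.mem_filter.mp hi).2)

end

theorem Skjj_ge_theta_Sk_div_lamj_general
    (n : ℕ) (k : ℕ)
    (α : ℝ) (hα : 0 < α) :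
    ∃ θ : ℝ, 0 < θ ∧
      ∀ lam : Fin n → ℝ, lam ∈ GammaTilde n α k → Antitone lam →
        ∀ j : Fin n, (j : ℕ) < k - 1 →
          SDel n α ((k : ℤ) - 1) lam j ≥ θ * SZ n α k lam / lam j := by
  refine ⟨(1 + 2 ^ n)⁻¹, by positivity, fun lam hlam hanti j hj => ?_⟩
  obtain ⟨k, rfl⟩ : ∃ k', k = k' + 1 + 1 := ⟨k - 2, by omega⟩
  set t := α ::ₘ (Finset.univ.erase j).val.map lam
  have hsplit : α ::ₘ Finset.univ.val.map lam = lam j ::ₘ t := by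
    rw [Multiset.cons_swap, ← Multiset.map_cons, Finset.erase_val,
      Multiset.cons_erase (Finset.mem_univ_val j)]
  have hs : lam j ::ₘ t ∈ Multiset.gardingCone (k + 1 + 1) :=
    hsplit ▸ cons_map_mem_gardingCone hα.le hlam
  have hcount : t.countP (lam j < ·) ≤ k + 1 := by
    have := countP_lt_map_erase_le hanti j
    rw [Multiset.countP_cons]
    split_ifs <;> omega
  have hcard : Multiset.card t = n := by
    rw [Multiset.card_cons, Multiset.card_map, ← Finset.card_def, Finset.card_erase_of_mem
      (Finset.mem_univ j), Finset.card_univ, Fintype.card_fin]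
    omega
  rw [show ((k + 1 + 1 : ℕ) : ℤ) - 1 = (k + 1 : ℕ) by push_cast; ring, SDel_natCast, SZ_natCast,
    hsplit, ge_iff_le]
  have key := Multiset.inv_one_add_two_pow_mul_esymm_cons_div_le hs hcount
  rwa [hcard] at key

theorem Skjj_ge_theta_Sk_div_lamj
    (n : ℕ) (hn : 2 ≤ n) (k : ℕ) (hk1 : 2 ≤ k) (hk : k ≤ n)
    (α : ℝ) (hα : 0 < α) :
    ∃ θ : ℝ, 0 < θ ∧
      ∀ lam : Fin n → ℝ, lam ∈ GammaTilde n α k → Antitone lam →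
        ∀ j : Fin n, (j : ℕ) < k - 1 →
          SDel n α ((k : ℤ) - 1) lam j ≥ θ * SZ n α k lam / lam j :=
  Skjj_ge_theta_Sk_div_lamj_general n k α hα
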